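/- Let G = (V,E) be a chordal graph and G' = (V,E') a chordal subgraph of G with |E \ E'| = k. Then there exists an increasing sequence of chordal graphs G' = G₀ ⊂ G₁ ⊂ ⋯ ⊂ G_{k−1} ⊂ G_k = G on vertex set V, where consecutive graphs differ by exactly one edge. -/

import Mathlib

/-!
Each step of the chain deletes one edge of `G` outside `G'`, so by induction on `k` it suffices
to find, whenever `G' ≤ G` are chordal and different, an edge `ab` of `G` outside `G'` such that
`G - ab` is chordal. Deleting `ab` keeps `G` chordal as soon as the common neighbours of `a` and
`b` form a clique: a chordless cycle of `G - ab` of length at least four must contain `a` and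
`b`, and chordality of `G` forces it to be a square `a x b y` with `x`, `y` common neighbours.

Such an edge is found by induction on the number of edges of `G`, starting from a non-isolated
simplicial vertex `v` of `G` (Dirac's theorem, proved via minimal separators, which are cliques).
An edge at `v` outside `G'` works. If all edges outside `G'` lie inside the neighbourhood of `v`,
any of them works, for otherwise `G'` contains a chordless square through `v`. Otherwise recurse
on `G - v` and the graph obtained from `G'` by eliminating `v` (deleting it and completing its
neighbourhood), which is again chordal and contained in `G - v`.
-/

/-- A graph is chordal (decomposable) if every cycle of length at least four has a
chord. -/
def IsChordal {V : Type*} (G : SimpleGraph V) : Prop :=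
  ∀ ⦃v : V⦄ (c : G.Walk v v), c.IsCycle → 4 ≤ c.length →
    ∃ u w : V, G.Adj u w ∧ u ∈ c.support ∧ w ∈ c.support ∧ s(u, w) ∉ c.edges

namespace SimpleGraph

variable {V : Type*} {G G' : SimpleGraph V} {s t A B K S : Set V} {a b c d u v w x y z : V}

open Walk

theorem isChordal_iff_not_isChordless :
    IsChordal G ↔ ∀ ⦃v : V⦄ (c : G.Walk v v), c.IsCycle → 4 ≤ c.length → ¬ c.IsChordless := by
  simp only [IsChordal, isChordless_iff_forall_mem_edges]
  grind

theorem _root_.IsChordal.not_isChordless (hG : IsChordal G) {c : G.Walk v v} (hc : c.IsCycle)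
    (hlen : 4 ≤ c.length) : ¬ c.IsChordless :=
  isChordal_iff_not_isChordless.mp hG c hc hlen

/-! ### Chordless walks and cycles -/

namespace Walk

theorem exists_adj_of_mem_support {p : G.Walk u v} (hp : ¬ p.Nil) (hz : z ∈ p.support) :
    ∃ w, G.Adj z w := by
  obtain ⟨e, he, hze⟩ := (mem_support_iff_exists_mem_edges_of_not_nil hp).mp hz
  obtain ⟨w, rfl⟩ := Sym2.mem_iff_exists.mp hze
  exact ⟨w, p.adj_of_mem_edges he⟩

theorem exists_eq_cons_cons_nil_of_length_eq_two {p : G.Walk u v} (hp : p.length = 2) :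
    ∃ (w : V) (h₁ : G.Adj u w) (h₂ : G.Adj w v), p = cons h₁ (cons h₂ nil) := by
  match p, hp with
  | .cons h₁ (.cons h₂ .nil), _ => exact ⟨_, h₁, h₂, rfl⟩

theorem IsPath.ne_start_of_mem_tail_support {p : G.Walk x y} (hp : p.IsPath)
    (hz : z ∈ p.support.tail) : z ≠ x := by
  have h := hp.support_nodup
  rw [← p.cons_tail_support, List.nodup_cons] at h
  rintro rfl
  exact h.1 hz

theorem isChordless_of_length_eq_dist [DecidableEq V] {p : G.Walk u v}
    (hp : p.length = G.dist u v) : p.IsChordless := by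
  have subwalk_edge : ∀ {a b : V} (q : G.Walk a b), q.IsSubwalk p → G.Adj a b →
      s(a, b) ∈ p.edges := by
    intro a b q hq hab
    have hq1 : q.length = 1 := by
      rw [length_eq_dist_of_subwalk hp hq, dist_eq_one_iff_adj.mpr hab]
    obtain ⟨h, rfl⟩ : ∃ h : G.Adj a b, q = cons h nil := by
      match q, hq1 with
      | .cons h .nil, _ => exact ⟨h, rfl⟩
    exact hq.edges_subset (by simp)
  rw [isChordless_iff_forall_mem_edges]
  intro x y hx hy hxy
  rw [← p.take_spec hx, mem_support_append_iff] at hy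
  rcases hy with hy | hy
  · rw [Sym2.eq_swap]
    exact subwalk_edge _
      ((isSubwalk_dropUntil _ hy).trans (isSubwalk_takeUntil _ hx)) hxy.symm
  · exact subwalk_edge _ ((isSubwalk_takeUntil _ hy).trans (isSubwalk_dropUntil _ hx)) hxy

theorem IsChordless.of_support_subset {p : G.Walk u v} {q : G.Walk x y} (hp : p.IsChordless)
    (hsupp : q.support ⊆ p.support) (hedges : p.edges ⊆ q.edges) : q.IsChordless := by
  rw [isChordless_iff_forall_mem_edges] at hp ⊢
  exact fun a b ha hb hab => hedges (hp (hsupp ha) (hsupp hb) hab)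

theorem IsChordless.reverse {p : G.Walk x y} (hp : p.IsChordless) : p.reverse.IsChordless :=
  hp.of_support_subset (by simp [List.subset_def]) (by simp [List.subset_def])

theorem isChordless_append {p : G.Walk u v} {q : G.Walk v u} (hp : p.IsChordless)
    (hq : q.IsChordless)
    (hpq : ∀ a ∈ p.support, ∀ b ∈ q.support, G.Adj a b → a ∈ q.support ∨ b ∈ p.support) :
    (p.append q).IsChordless := by
  rw [isChordless_iff_forall_mem_edges]
  have hp' := isChordless_iff_forall_mem_edges.mp hp
  have hq' := isChordless_iff_forall_mem_edges.mp hq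
  intro a b ha hb hab
  rw [mem_support_append_iff] at ha hb
  rw [edges_append, List.mem_append]
  rcases ha with ha | ha <;> rcases hb with hb | hb
  · exact .inl (hp' ha hb hab)
  · rcases hpq a ha b hb hab with ha' | hb'
    · exact .inr (hq' ha' hb hab)
    · exact .inl (hp' ha hb' hab)
  · rcases hpq b hb a ha hab.symm with hb' | ha'
    · exact .inr (hq' ha hb' hab)
    · exact .inl (hp' ha' hb hab)
  · exact .inr (hq' ha hb hab)

theorem IsCycle.eq_or_eq_of_mem_support_append {p : G.Walk u v} {q : G.Walk v u}
    (hc : (p.append q).IsCycle) (hzp : z ∈ p.support) (hzq : z ∈ q.support) :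
    z = u ∨ z = v := by
  have hnodup := hc.support_nodup
  rw [tail_support_append, List.nodup_append] at hnodup
  rw [← p.cons_tail_support, List.mem_cons] at hzp
  rw [← q.cons_tail_support, List.mem_cons] at hzq
  rcases hzp with rfl | hzp
  · exact .inl rfl
  rcases hzq with rfl | hzq
  · exact .inr rfl
  exact absurd rfl (hnodup.2.2 z hzp z hzq)

theorem IsCycle.length_eq_three_of_adj_snd_penultimate {c : G.Walk u u} (hc : c.IsCycle)
    (h : c.toSubgraph.Adj c.snd c.penultimate) : c.length = 3 := by
  have h3 := hc.three_le_length
  have hmem : c.penultimate ∈ c.toSubgraph.neighborSet (c.getVert 1) := h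
  rw [hc.neighborSet_toSubgraph_internal one_ne_zero (by omega)] at hmem
  rcases hmem with h0 | h2
  · have := (hc.getVert_endpoint_iff (i := c.length - 1) (by omega)).mp (by simpa using h0)
    omega
  · have := hc.getVert_injOn (by simp only [Set.mem_ofPred_eq]; omega)
      (by simp only [Set.mem_ofPred_eq]; omega) h2
    omega

theorem IsCycle.length_eq_three_of_mem_edges [DecidableEq V] {c : G.Walk u u} (hc : c.IsCycle)
    (hxy : s(x, y) ∈ c.edges) (hyz : s(y, z) ∈ c.edges) (hxz : s(x, z) ∈ c.edges) :
    c.length = 3 := by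
  have hx := c.fst_mem_support_of_mem_edges hxy
  have hc' := hc.rotate hx
  have hadj : ∀ {a b}, s(a, b) ∈ c.edges → (c.rotate x hx).toSubgraph.Adj a b := fun h => by
    rw [← Subgraph.mem_edgeSet, mem_edges_toSubgraph]
    exact (c.rotate_edges x hx).mem_iff.mpr h
  have hnbr : ∀ {w}, s(x, w) ∈ c.edges →
      w = (c.rotate x hx).snd ∨ w = (c.rotate x hx).penultimate := fun h => by
    have : _ ∈ (c.rotate x hx).toSubgraph.neighborSet x := hadj h
    rwa [hc'.neighborSet_toSubgraph_endpoint] at this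
  rw [← length_rotate c x hx]
  have hyz' := hadj hyz
  rcases hnbr hxy with rfl | rfl <;> rcases hnbr hxz with rfl | rfl
  · exact absurd rfl (c.adj_of_mem_edges hyz).ne
  · exact hc'.length_eq_three_of_adj_snd_penultimate hyz'
  · exact hc'.length_eq_three_of_adj_snd_penultimate hyz'.symm
  · exact absurd rfl (c.adj_of_mem_edges hyz).ne

theorem IsCycle.exists_cons_of_mem_edges [DecidableEq V] {c : G.Walk u u} (hc : c.IsCycle)
    (he : s(x, y) ∈ c.edges) :
    ∃ (h : G.Adj x y) (p : G.Walk y x), (cons h p).IsCycle ∧ (cons h p).length = c.length ∧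
      (∀ w, w ∈ (cons h p).support ↔ w ∈ c.support) ∧
      ∀ e, e ∈ (cons h p).edges ↔ e ∈ c.edges := by
  have hx := c.fst_mem_support_of_mem_edges he
  obtain ⟨d, hd, hdy, hlen, hsupp, hedges⟩ : ∃ d : G.Walk x x, d.IsCycle ∧ d.snd = y ∧
      d.length = c.length ∧ (∀ w, w ∈ d.support ↔ w ∈ c.support) ∧
      ∀ e, e ∈ d.edges ↔ e ∈ c.edges := by
    have hc' := hc.rotate hx
    have hy : y ∈ (c.rotate x hx).toSubgraph.neighborSet x := by
      rw [Subgraph.mem_neighborSet, ← Subgraph.mem_edgeSet, mem_edges_toSubgraph]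
      exact (c.rotate_edges x hx).mem_iff.mpr he
    rw [hc'.neighborSet_toSubgraph_endpoint] at hy
    rcases hy with hy | hy
    · exact ⟨_, hc', hy.symm, length_rotate .., fun w => mem_support_rotate_iff ..,
        fun e => (c.rotate_edges x hx).mem_iff⟩
    · refine ⟨_, hc'.reverse, ?_, by simp, fun w => ?_, fun e => ?_⟩
      · rw [hy, penultimate, ← getVert_reverse]
      · rw [support_reverse, List.mem_reverse, mem_support_rotate_iff]
      · rw [edges_reverse, List.mem_reverse]
        exact (c.rotate_edges x hx).mem_iff
  subst hdy
  refine ⟨d.adj_snd hd.not_nil, d.tail, ?_⟩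
  rw [cons_tail_eq _ hd.not_nil]
  exact ⟨hd, hlen, hsupp, hedges⟩

end Walk

/-! ### Induced subgraphs, minimal separators and simplicial vertices -/

/-- Unlike `G.induce s`, this keeps the vertex type `V`, so that walks transfer to `G` by
`Walk.mapLe`. -/
def restrict (G : SimpleGraph V) (s : Set V) : SimpleGraph V where
  Adj x y := x ∈ s ∧ y ∈ s ∧ G.Adj x y
  symm := ⟨fun _ _ ⟨hx, hy, h⟩ => ⟨hy, hx, h.symm⟩⟩
  loopless := ⟨fun _ ⟨_, _, h⟩ => h.ne rfl⟩

theorem restrict_le : G.restrict s ≤ G := fun _ _ h => h.2.2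

theorem restrict_mono (h : s ⊆ t) : G.restrict s ≤ G.restrict t :=
  fun _ _ ⟨hx, hy, hxy⟩ => ⟨h hx, h hy, hxy⟩

theorem Reachable.mem_of_forall_adj_mem (hA : ∀ ⦃a b⦄, a ∈ A → G.Adj a b → b ∈ A)
    (hx : x ∈ A) (h : G.Reachable x y) : y ∈ A := by
  obtain ⟨p⟩ := h
  induction p with
  | nil => exact hx
  | cons h _ ih => exact ih (hA hx h)

theorem Reachable.mem_of_restrict (h : (G.restrict s).Reachable x y) (hx : x ∈ s) : y ∈ s :=
  h.mem_of_forall_adj_mem (fun _ _ _ (hab : (G.restrict s).Adj _ _) => hab.2.1) hx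

theorem Reachable.restrict_setOf_reachable (h : (G.restrict s).Reachable x y) :
    (G.restrict {z | (G.restrict s).Reachable x z}).Reachable x y := by
  suffices ∀ {u} (p : (G.restrict s).Walk u y), (G.restrict s).Reachable x u →
      (G.restrict {z | (G.restrict s).Reachable x z}).Reachable u y from
    this h.some .rfl
  clear h
  intro u p hu
  induction p with
  | nil => rfl
  | cons had _ ih =>
    have hv := hu.trans had.reachable
    exact Adj.reachable (⟨hu, hv, had.2.2⟩ : (G.restrict _).Adj _ _) |>.trans (ih hv)

theorem Reachable.exists_isChordless_of_restrict (h : (G.restrict s).Reachable x y)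
    (hx : x ∈ s) : ∃ p : G.Walk x y, p.IsPath ∧ p.IsChordless ∧ ∀ z ∈ p.support, z ∈ s := by
  classical
  obtain ⟨p, hp, hlen⟩ := h.exists_path_of_dist
  have hsupp : ∀ z ∈ p.support, z ∈ s := fun z hz =>
    (p.takeUntil z hz).reachable.mem_of_restrict hx
  have hpc := isChordless_iff_forall_mem_edges.mp (isChordless_of_length_eq_dist hlen)
  refine ⟨p.mapLe restrict_le, (isPath_mapLe _).mpr hp, ?_, by simpa using hsupp⟩
  rw [isChordless_iff_forall_mem_edges]
  simp only [support_mapLe_eq_support, edges_mapLe_eq_edges]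
  exact fun a b ha hb hab => hpc ha hb ⟨hsupp a ha, hsupp b hb, hab⟩

theorem _root_.IsChordal.restrict (hG : IsChordal G) (s : Set V) : IsChordal (G.restrict s) := by
  rw [isChordal_iff_not_isChordless] at hG ⊢
  intro v c hc hlen hcl
  refine hG (c.mapLe restrict_le) ((isCycle_mapLe _).mpr hc) (by simpa) ?_
  have hs : ∀ z ∈ c.support, z ∈ s := fun z hz =>
    (c.exists_adj_of_mem_support hc.not_nil hz).choose_spec.1
  rw [isChordless_iff_forall_mem_edges] at hcl ⊢
  simp only [support_mapLe_eq_support, edges_mapLe_eq_edges]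
  exact fun a b ha hb hab => hcl ha hb ⟨hs a ha, hs b hb, hab⟩

/-- Otherwise shortest paths from `x` to `y` through `A` and through `B` close a chordless cycle
of length at least four. -/
theorem _root_.IsChordal.adj_of_reachable_restrict (hG : IsChordal G) (hxy : x ≠ y)
    (hA : (G.restrict (insert x (insert y A))).Reachable x y)
    (hB : (G.restrict (insert x (insert y B))).Reachable x y)
    (hAB : ∀ a ∈ A, ∀ b ∈ B, a ≠ b ∧ ¬ G.Adj a b) : G.Adj x y := by
  by_contra hnxy
  obtain ⟨p, hp, hpc, hpA⟩ := hA.exists_isChordless_of_restrict (by simp)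
  obtain ⟨q, hq, hqc, hqB⟩ := hB.exists_isChordless_of_restrict (by simp)
  have two_le : ∀ r : G.Walk x y, 2 ≤ r.length := fun r => by
    by_contra h
    interval_cases hr : r.length
    · exact hxy (eq_of_length_eq_zero hr)
    · exact hnxy (adj_of_length_eq_one hr)
  have hoff : ∀ a ∈ p.support, ∀ b ∈ q.support, a ≠ x → a ≠ y → b ≠ x → b ≠ y →
      a ≠ b ∧ ¬ G.Adj a b := by
    intro a ha b hb hax hay hbx hby
    have ha' := hpA a ha
    have hb' := hqB b hb
    simp only [Set.mem_insert_iff, hax, hay, hbx, hby, false_or] at ha' hb'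
    exact hAB a ha' b hb'
  have hcyc : (p.append q.reverse).IsCycle := by
    refine hp.isCycle_append hq.reverse (List.disjoint_left.mpr fun a ha ha' => ?_)
      (.inl (two_le p))
    have hax := hp.ne_start_of_mem_tail_support ha
    have hay := hq.reverse.ne_start_of_mem_tail_support ha'
    rw [support_reverse] at ha'
    exact (hoff a (List.mem_of_mem_tail ha) a (List.mem_reverse.mp (List.mem_of_mem_tail ha'))
      hax hay hax hay).1 rfl
  refine hG.not_isChordless hcyc ?_ (isChordless_append hpc hqc.reverse ?_)
  · simpa using add_le_add (two_le p) (two_le q)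
  intro a ha b hb hab
  simp only [support_reverse, List.mem_reverse] at hb ⊢
  by_cases hax : a = x
  · exact .inl (hax ▸ q.start_mem_support)
  by_cases hay : a = y
  · exact .inl (hay ▸ q.end_mem_support)
  by_cases hbx : b = x
  · exact .inr (hbx ▸ p.start_mem_support)
  by_cases hby : b = y
  · exact .inr (hby ▸ p.end_mem_support)
  exact absurd hab (hoff a ha b hb hax hay hbx hby).2

theorem _root_.IsChordal.adj_or_adj_of_square (hG : IsChordal G) (hvc : G.Adj v c)
    (hcy : G.Adj c y) (hyd : G.Adj y d) (hdv : G.Adj d v) (hvy : v ≠ y) (hcd : c ≠ d) :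
    G.Adj c d ∨ G.Adj v y := by
  by_contra! h
  refine h.1 (hG.adj_of_reachable_restrict hcd (A := {v}) (B := {y}) ?_ ?_ ?_)
  · exact (Adj.reachable (⟨by simp, by simp, hvc.symm⟩ : (G.restrict _).Adj c v)).trans
      (Adj.reachable ⟨by simp, by simp, hdv.symm⟩)
  · exact (Adj.reachable (⟨by simp, by simp, hcy⟩ : (G.restrict _).Adj c y)).trans
      (Adj.reachable ⟨by simp, by simp, hyd⟩)
  · rintro _ rfl _ rfl
    exact ⟨hvy, h.2⟩

theorem exists_minimal_separator (hs : s.Finite) (ha : a ∈ s) (hb : b ∈ s) (hab : a ≠ b)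
    (hnadj : ¬ G.Adj a b) :
    ∃ S ⊆ s, a ∉ S ∧ b ∉ S ∧ ¬ (G.restrict (s \ S)).Reachable a b ∧
      ∀ x ∈ S, (G.restrict (insert x (s \ S))).Reachable a b := by
  set 𝒮 := {S | S ⊆ s \ {a, b} ∧ ¬ (G.restrict (s \ S)).Reachable a b}
  have h𝒮 : 𝒮.Finite := hs.sdiff.finite_subsets.subset fun _ hS => hS.1
  have hall : s \ {a, b} ∈ 𝒮 := by
    refine ⟨subset_rfl, fun h => hab (h.mem_of_forall_adj_mem (A := {a}) ?_ rfl).symm⟩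
    rintro u w hu ⟨-, ⟨hws, hw⟩, huw⟩
    rw [Set.mem_singleton_iff.mp hu] at huw
    have hw' : w = a ∨ w = b := by
      by_contra! h
      exact hw ⟨hws, by simpa using h⟩
    rcases hw' with rfl | rfl
    · exact absurd huw (G.loopless.irrefl _)
    · exact absurd huw hnadj
  obtain ⟨S, -, hS, hSmin⟩ := h𝒮.exists_le_minimal hall
  refine ⟨S, fun x hx => (hS.1 hx).1, fun h => (hS.1 h).2 (by simp),
    fun h => (hS.1 h).2 (by simp), hS.2, fun x hx => ?_⟩
  by_contra hx'
  have hsub : S \ {x} ∈ 𝒮 := by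
    refine ⟨Set.sdiff_subset.trans hS.1, fun h => hx' ?_⟩
    convert h using 2
    ext z
    have := (hS.1 hx).1
    by_cases hzx : z = x <;> simp_all
  exact (hSmin hsub Set.sdiff_subset hx).2 rfl

theorem exists_adj_of_reachable_insert (hsep : ¬ (G.restrict t).Reachable a b) (ha : a ∈ t)
    (h : (G.restrict (insert x t)).Reachable a b) :
    ∃ u, (G.restrict t).Reachable a u ∧ G.Adj x u := by
  by_contra! hx
  refine hsep (h.mem_of_forall_adj_mem (A := {u | (G.restrict t).Reachable a u}) ?_ .rfl)
  rintro u w hu ⟨-, hw, huw⟩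
  rcases hw with rfl | hw
  · exact absurd huw.symm (hx u hu)
  · exact hu.trans (Adj.reachable ⟨hu.mem_of_restrict ha, hw, huw⟩)

theorem reachable_restrict_insert_insert (hx : G.Adj x c) (hy : G.Adj y d)
    (hc : (G.restrict t).Reachable a c) (hd : (G.restrict t).Reachable a d) :
    (G.restrict (insert x (insert y {u | (G.restrict t).Reachable a u}))).Reachable x y := by
  set C := {u | (G.restrict t).Reachable a u}
  have hxc : (G.restrict (insert x (insert y C))).Adj x c := ⟨by simp, by simp [C, hc], hx⟩
  have hdy : (G.restrict (insert x (insert y C))).Adj d y := ⟨by simp [C, hd], by simp, hy.symm⟩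
  have hcd := hc.restrict_setOf_reachable.symm.trans hd.restrict_setOf_reachable
  exact hxc.reachable.trans <|
    (hcd.mono (restrict_mono ((Set.subset_insert _ _).trans (Set.subset_insert _ _)))).trans
      hdy.reachable

theorem _root_.IsChordal.isClique_of_separator (hG : IsChordal G)
    (hsep : ¬ (G.restrict t).Reachable a b) (ha : a ∈ t) (hb : b ∈ t)
    (hnbr : ∀ x ∈ S, (∃ u, (G.restrict t).Reachable a u ∧ G.Adj x u) ∧
      ∃ u, (G.restrict t).Reachable b u ∧ G.Adj x u) :
    G.IsClique S := by
  intro x hx y hy hxy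
  obtain ⟨⟨ax, hax, hxax⟩, ⟨bx, hbx, hxbx⟩⟩ := hnbr x hx
  obtain ⟨⟨ay, hay, hyay⟩, ⟨by', hby, hyby⟩⟩ := hnbr y hy
  refine hG.adj_of_reachable_restrict hxy (reachable_restrict_insert_insert hxax hyay hax hay)
    (reachable_restrict_insert_insert hxbx hyby hbx hby) fun u hu w hw => ⟨?_, fun huw => ?_⟩
  · rintro rfl
    exact hsep (hu.trans (Set.mem_ofPred.mp hw).symm)
  · exact hsep <| hu.trans <|
      (Adj.reachable (⟨hu.mem_of_restrict ha, hw.mem_of_restrict hb, huw⟩ :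
        (G.restrict t).Adj u w)).trans hw.symm

theorem exists_isClique_inter_neighborSet_of_separator
    (ih : ∀ t ⊂ s, ∀ K : Set V, G.IsClique K → (t \ K).Nonempty →
      ∃ v ∈ t \ K, G.IsClique (t ∩ G.neighborSet v))
    (hS : G.IsClique S) (hSs : S ⊆ s) (hc : c ∈ s \ S) (hd : d ∈ s \ S)
    (hcd : ¬ (G.restrict (s \ S)).Reachable c d) :
    ∃ v, (G.restrict (s \ S)).Reachable c v ∧ G.IsClique (s ∩ G.neighborSet v) := by
  set C := {u | (G.restrict (s \ S)).Reachable c u}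
  have hCs : C ⊆ s \ S := fun u hu => hu.mem_of_restrict hc
  have hlt : C ∪ S ⊂ s := by
    refine (Set.ssubset_iff_of_subset ?_).mpr ⟨d, hd.1, ?_⟩
    · exact Set.union_subset (hCs.trans Set.sdiff_subset) hSs
    · rintro (hdC | hdS)
      · exact hcd hdC
      · exact hd.2 hdS
  obtain ⟨v, ⟨hvC | hvS, hvS'⟩, hv⟩ := ih (C ∪ S) hlt S hS ⟨c, .inl .rfl, hc.2⟩
  · refine ⟨v, hvC, hv.subset ?_⟩
    rintro w ⟨hws, hvw⟩
    refine ⟨?_, hvw⟩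
    by_cases hwS : w ∈ S
    · exact .inr hwS
    · exact .inl (hvC.trans (Adj.reachable ⟨hCs hvC, ⟨hws, hwS⟩, hvw⟩))
  · exact absurd hvS hvS'

/-- Dirac's theorem; avoiding an arbitrary clique `K` is what lets the induction over minimal
separators go through. -/
theorem _root_.IsChordal.exists_isClique_inter_neighborSet (hG : IsChordal G) (hs : s.Finite)
    (hK : G.IsClique K) (hne : (s \ K).Nonempty) :
    ∃ v ∈ s \ K, G.IsClique (s ∩ G.neighborSet v) := by
  induction hn : s.ncard using Nat.strong_induction_on generalizing s K with
  | _ n ih =>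
  by_cases hcl : G.IsClique s
  · obtain ⟨v, hv⟩ := hne
    exact ⟨v, hv, hcl.subset Set.inter_subset_left⟩
  obtain ⟨a, ha, b, hb, hab, hnadj⟩ : ∃ a ∈ s, ∃ b ∈ s, a ≠ b ∧ ¬ G.Adj a b := by
    simpa [IsClique, Set.Pairwise] using hcl
  obtain ⟨S, hSs, haS, hbS, hsep, hmin⟩ := exists_minimal_separator hs ha hb hab hnadj
  have ha' : a ∈ s \ S := ⟨ha, haS⟩
  have hb' : b ∈ s \ S := ⟨hb, hbS⟩
  have hsep' : ¬ (G.restrict (s \ S)).Reachable b a := mt Reachable.symm hsep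
  have hS : G.IsClique S := hG.isClique_of_separator hsep ha' hb' fun x hx =>
    ⟨exists_adj_of_reachable_insert hsep ha' (hmin x hx),
      exists_adj_of_reachable_insert hsep' hb' (hmin x hx).symm⟩
  have ih' : ∀ t ⊂ s, ∀ K : Set V, G.IsClique K → (t \ K).Nonempty →
      ∃ v ∈ t \ K, G.IsClique (t ∩ G.neighborSet v) := fun t ht K hK hne =>
    ih _ (hn ▸ Set.ncard_lt_ncard ht hs) (hs.subset ht.subset) hK hne rfl
  obtain ⟨v, hav, hv⟩ := exists_isClique_inter_neighborSet_of_separator ih' hS hSs ha' hb' hsep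
  obtain ⟨w, hbw, hw⟩ := exists_isClique_inter_neighborSet_of_separator ih' hS hSs hb' ha' hsep'
  have hvs := hav.mem_of_restrict ha'
  have hws := hbw.mem_of_restrict hb'
  have hvw : v ≠ w ∧ ¬ G.Adj v w := by
    refine ⟨?_, fun hvw => hsep (hav.trans ?_)⟩
    · rintro rfl
      exact hsep (hav.trans hbw.symm)
    · exact (Adj.reachable (⟨hvs, hws, hvw⟩ : (G.restrict _).Adj v w)).trans hbw.symm
  by_cases hvK : v ∈ K
  · exact ⟨w, ⟨hws.1, fun hwK => hvw.2 (hK hvK hwK hvw.1)⟩, hw⟩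
  · exact ⟨v, ⟨hvs.1, hvK⟩, hv⟩

theorem _root_.IsChordal.exists_isClique_neighborSet [Finite V] (hG : IsChordal G)
    (hcd : G.Adj c d) : ∃ v, (∃ w, G.Adj v w) ∧ G.IsClique (G.neighborSet v) := by
  have hne : ({z | ∃ w, G.Adj z w} \ ∅).Nonempty := ⟨c, ⟨d, hcd⟩, Set.notMem_empty c⟩
  obtain ⟨v, ⟨hv, -⟩, hcl⟩ :=
    hG.exists_isClique_inter_neighborSet (Set.toFinite _) isClique_empty hne
  refine ⟨v, hv, hcl.subset fun w hw => ?_⟩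
  exact ⟨⟨v, hw.symm⟩, hw⟩

/-! ### Vertex elimination -/

def eliminate (G : SimpleGraph V) (v : V) : SimpleGraph V where
  Adj x y := x ≠ v ∧ y ≠ v ∧ (G.Adj x y ∨ x ≠ y ∧ G.Adj v x ∧ G.Adj v y)
  symm := ⟨fun _ _ ⟨hx, hy, h⟩ => ⟨hy, hx, h.imp Adj.symm fun ⟨hne, hvx, hvy⟩ =>
    ⟨hne.symm, hvy, hvx⟩⟩⟩
  loopless := ⟨fun _ ⟨_, _, h⟩ => h.elim (G.loopless.irrefl _) fun h => h.1 rfl⟩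

theorem eliminate_le_restrict_compl (hle : G' ≤ G) (hv : G.IsClique (G.neighborSet v)) :
    G'.eliminate v ≤ G.restrict {v}ᶜ := by
  rintro x y ⟨hx, hy, hxy | ⟨hxy, hvx, hvy⟩⟩
  · exact ⟨hx, hy, hle hxy⟩
  · exact ⟨hx, hy, hv (hle hvx) (hle hvy) hxy⟩

theorem Walk.mem_edgeSet_of_mem_edges_eliminate {p : (G.eliminate v).Walk u w}
    (hxy : s(x, y) ∉ p.edges) (hN : ∀ z ∈ p.support, G.Adj v z → z = x ∨ z = y) :
    ∀ e ∈ p.edges, e ∈ G.edgeSet := by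
  intro e he
  induction e using Sym2.ind with | h a b => ?_
  obtain ⟨-, -, hab | ⟨hab, hva, hvb⟩⟩ := p.adj_of_mem_edges he
  · exact hab
  rcases hN a (p.fst_mem_support_of_mem_edges he) hva with rfl | rfl <;>
    rcases hN b (p.snd_mem_support_of_mem_edges he) hvb with rfl | rfl
  · exact absurd rfl hab
  · exact absurd he hxy
  · exact absurd (Sym2.eq_swap ▸ he) hxy
  · exact absurd rfl hab

/-- Replacing the fill edge `xy` of a chordless cycle of `G.eliminate v` by the path `x v y`
gives a chordless cycle of `G`, one edge longer. -/
theorem _root_.IsChordal.not_isChordless_cons_eliminate (hG : IsChordal G)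
    {h : (G.eliminate v).Adj x y} {p : (G.eliminate v).Walk y x} (hc : (cons h p).IsCycle)
    (hcl : (cons h p).IsChordless) (hlen : 3 ≤ p.length) (hfill : ¬ G.Adj x y)
    (hN : ∀ z ∈ p.support, G.Adj v z → z = x ∨ z = y) : False := by
  obtain ⟨-, hvx, hvy⟩ := h.2.2.resolve_left hfill
  obtain ⟨hp, hxy⟩ := (cons_isCycle_iff p h).mp hc
  have hpv : v ∉ p.support := fun hv =>
    (p.exists_adj_of_mem_support (not_nil_iff_lt_length.mpr (by omega)) hv).choose_spec.1 rfl
  have hpG := p.mem_edgeSet_of_mem_edges_eliminate hxy hN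
  set D : G.Walk v v := cons hvy ((p.transfer G hpG).concat hvx.symm)
  have hD : D.IsCycle := by
    refine (cons_isCycle_iff _ _).mpr ⟨(hp.transfer hpG).concat (by simpa using hpv) _, ?_⟩
    simp only [edges_concat, edges_transfer, List.concat_eq_append, List.mem_append,
      List.mem_singleton, Sym2.eq_iff, not_or]
    refine ⟨fun he => hpv (p.fst_mem_support_of_mem_edges he), ?_, ?_⟩ <;> rintro ⟨h1, h2⟩
    · exact hvx.ne h1
    · exact h.ne h2.symm
  refine hG.not_isChordless hD (by simp [D]; omega) ?_
  rw [isChordless_iff_forall_mem_edges]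
  have hvN : ∀ z ∈ D.support, G.Adj v z → s(v, z) ∈ D.edges := by
    intro z hz hvz
    have hz' : z ∈ p.support := by simpa [D, hvz.ne.symm] using hz
    rcases hN z hz' hvz with rfl | rfl <;> simp [D, Sym2.eq_swap]
  intro a b ha hb hab
  by_cases hav : a = v
  · exact hav ▸ hvN b hb (hav ▸ hab)
  by_cases hbv : b = v
  · exact Sym2.eq_swap ▸ hbv ▸ hvN a ha (hbv ▸ hab.symm)
  have hpa : a ∈ p.support := by simpa [D, hav] using ha
  have hpb : b ∈ p.support := by simpa [D, hbv] using hb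
  have := hcl.mem_edges (by simp [hpa]) (by simp [hpb])
    (⟨hav, hbv, .inl hab⟩ : (G.eliminate v).Adj a b)
  rw [edges_cons, List.mem_cons] at this
  rcases this with he | he
  · rcases Sym2.eq_iff.mp he with ⟨rfl, rfl⟩ | ⟨rfl, rfl⟩
    · exact absurd hab hfill
    · exact absurd hab.symm hfill
  · simp [D, he]

theorem _root_.IsChordal.eliminate (hG : IsChordal G) (v : V) : IsChordal (G.eliminate v) := by
  classical
  rw [isChordal_iff_not_isChordless]
  intro r c hc hlen hcl
  have hv : ∀ z ∈ c.support, z ≠ v := fun z hz =>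
    (c.exists_adj_of_mem_support hc.not_nil hz).choose_spec.1
  by_cases hfill : ∃ e ∈ c.edges, e ∉ G.edgeSet
  swap
  · have hcG : ∀ e ∈ c.edges, e ∈ G.edgeSet := fun e he => by_contra fun h => hfill ⟨e, he, h⟩
    refine hG.not_isChordless (hc.transfer hcG) (by simpa) ?_
    rw [isChordless_iff_forall_mem_edges] at hcl ⊢
    simp only [support_transfer, edges_transfer]
    exact fun a b ha hb hab => hcl ha hb ⟨hv a ha, hv b hb, .inl hab⟩
  obtain ⟨e, he, heG⟩ := hfill
  induction e using Sym2.ind with | h x y => ?_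
  obtain ⟨-, hvx, hvy⟩ := (c.adj_of_mem_edges he).2.2.resolve_left heG
  have hx := c.fst_mem_support_of_mem_edges he
  have hy := c.snd_mem_support_of_mem_edges he
  have hfillN : ∀ {a b}, a ∈ c.support → b ∈ c.support → a ≠ b → G.Adj v a → G.Adj v b →
      s(a, b) ∈ c.edges := fun ha hb hab hva hvb =>
    hcl.mem_edges ha hb ⟨hv _ ha, hv _ hb, .inr ⟨hab, hva, hvb⟩⟩
  -- `N(v)` is a clique of `G.eliminate v`, so a chordless cycle meets it in at most two vertices
  have hN : ∀ z ∈ c.support, G.Adj v z → z = x ∨ z = y := by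
    intro z hz hvz
    by_contra! hzxy
    have := hc.length_eq_three_of_mem_edges he (hfillN hy hz hzxy.2.symm hvy hvz)
      (hfillN hx hz hzxy.1.symm hvx hvz)
    omega
  obtain ⟨h, p, hc', hlen', hsupp, hedges⟩ := hc.exists_cons_of_mem_edges he
  refine hG.not_isChordless_cons_eliminate hc'
    (hcl.of_support_subset (fun z hz => (hsupp z).mp hz) fun e he => (hedges e).mpr he)
    (by simp only [length_cons] at hlen'; omega) heG fun z hz => hN z ((hsupp z).mp ?_)
  simp [hz]

/-! ### Deleting an edge -/

/-- An arc between `a` and `b` of a chordless cycle of `G - ab` closes, with the edge `ab`, a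
chordless cycle of `G`; hence it has length two. -/
theorem _root_.IsChordal.length_eq_two_of_append_deleteEdges (hG : IsChordal G)
    (hab : G.Adj a b) {p : (G.deleteEdges {s(a, b)}).Walk a b}
    {q : (G.deleteEdges {s(a, b)}).Walk b a} (hc : (p.append q).IsCycle)
    (hcl : (p.append q).IsChordless) : p.length = 2 := by
  have hp : p.IsPath := hc.isPath_of_append_left (not_nil_of_ne hab.ne.symm)
  have hpe : s(a, b) ∉ p.edges := fun h => by
    simpa [edgeSet_deleteEdges] using p.edges_subset_edgeSet h
  have h2 : 2 ≤ p.length := by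
    by_contra h
    interval_cases hl : p.length
    · exact hab.ne (eq_of_length_eq_zero hl)
    · simpa using adj_of_length_eq_one hl
  by_contra hne
  set D : G.Walk a a := cons hab (p.mapLe (deleteEdges_le _)).reverse
  have hD : D.IsCycle :=
    (cons_isCycle_iff _ _).mpr ⟨((isPath_mapLe _).mpr hp).reverse, by simpa using hpe⟩
  refine hG.not_isChordless hD (by simp [D]; omega) ?_
  rw [isChordless_iff_forall_mem_edges]
  have hDp : ∀ z ∈ D.support, z ∈ p.support := fun z hz =>
    (by simpa [D] using hz : z = a ∨ z ∈ p.support).elim (· ▸ p.start_mem_support) id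
  intro u w hu hw huw
  by_cases he : s(u, w) = s(a, b)
  · simp [D, he]
  have := hcl.mem_edges (by simp [hDp u hu]) (by simp [hDp w hw])
    ((deleteEdges_adj ..).mpr ⟨huw, he⟩)
  rw [edges_append, List.mem_append] at this
  rcases this with hpuw | hquw
  · simp [D, hpuw]
  refine absurd ?_ he
  rcases hc.eq_or_eq_of_mem_support_append (hDp u hu) (q.fst_mem_support_of_mem_edges hquw)
    with rfl | rfl <;>
  rcases hc.eq_or_eq_of_mem_support_append (hDp w hw) (q.snd_mem_support_of_mem_edges hquw)
    with rfl | rfl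
  · exact absurd rfl huw.ne
  · rfl
  · exact Sym2.eq_swap
  · exact absurd rfl huw.ne

theorem _root_.IsChordal.mem_support_of_isChordless_deleteEdges (hG : IsChordal G)
    {c : (G.deleteEdges {s(a, b)}).Walk u u} (hc : c.IsCycle) (hlen : 4 ≤ c.length)
    (hcl : c.IsChordless) : a ∈ c.support ∧ b ∈ c.support := by
  obtain ⟨x, y, hxy, hx, hy, hnot⟩ := hG (c.mapLe (deleteEdges_le _))
    ((isCycle_mapLe _).mpr hc) (by simpa)
  simp only [support_mapLe_eq_support, edges_mapLe_eq_edges] at hx hy hnot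
  by_cases he : s(x, y) = s(a, b)
  · rcases Sym2.eq_iff.mp he with ⟨rfl, rfl⟩ | ⟨rfl, rfl⟩
    · exact ⟨hx, hy⟩
    · exact ⟨hy, hx⟩
  · exact absurd (hcl.mem_edges hx hy ((deleteEdges_adj ..).mpr ⟨hxy, he⟩)) hnot

theorem _root_.IsChordal.deleteEdges_of_isClique (hG : IsChordal G) (hab : G.Adj a b)
    (hC : G.IsClique (G.commonNeighbors a b)) : IsChordal (G.deleteEdges {s(a, b)}) := by
  classical
  rw [isChordal_iff_not_isChordless]
  intro r c hc hlen hcl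
  obtain ⟨ha, hb⟩ := hG.mem_support_of_isChordless_deleteEdges hc hlen hcl
  obtain ⟨p, q, hpq⟩ : ∃ (p : (G.deleteEdges {s(a, b)}).Walk a b) (q : _),
      p.append q = c.rotate a ha :=
    ⟨_, _, (c.rotate a ha).take_spec ((mem_support_rotate_iff ..).mpr hb)⟩
  have hc' : (p.append q).IsCycle := hpq ▸ hc.rotate ha
  have hcl' : (p.append q).IsChordless := hpq ▸ hcl.of_support_subset
    (fun z hz => (mem_support_rotate_iff ..).mp hz) fun e he => (c.rotate_edges a ha).mem_iff.mpr he
  have hlen' : 4 ≤ (p.append q).length := by rw [hpq, length_rotate]; exact hlen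
  obtain ⟨x, hax, hxb, rfl⟩ := exists_eq_cons_cons_nil_of_length_eq_two
    (hG.length_eq_two_of_append_deleteEdges hab hc' hcl')
  obtain ⟨y, hay, hyb, hq⟩ := exists_eq_cons_cons_nil_of_length_eq_two
    (hG.length_eq_two_of_append_deleteEdges hab (q := (cons hax (cons hxb nil)).reverse)
      (by rw [← reverse_append]; exact hc'.reverse) (by rw [← reverse_append]; exact hcl'.reverse))
  have hqy : y ∈ q.support ∧ s(a, y) ∈ q.edges := by
    have h1 : y ∈ q.reverse.support := by simp [hq]
    have h2 : s(a, y) ∈ q.reverse.edges := by simp [hq]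
    simpa using And.intro h1 h2
  have hxy : x ≠ y := by
    rintro rfl
    rcases hc'.eq_or_eq_of_mem_support_append (by simp) hqy.1 with rfl | rfl
    · exact hax.ne rfl
    · exact hxb.ne rfl
  have hGxy : G.Adj x y := hC ⟨(deleteEdges_le _) hax, (deleteEdges_le _) hxb.symm⟩
    ⟨(deleteEdges_le _) hay, (deleteEdges_le _) hyb.symm⟩ hxy
  have hxy' : s(x, y) ≠ s(a, b) := by
    rintro h
    rcases Sym2.eq_iff.mp h with ⟨rfl, -⟩ | ⟨rfl, -⟩
    · exact hax.ne rfl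
    · exact hxb.ne rfl
  have := hc'.length_eq_three_of_mem_edges (x := a) (y := x) (z := y) (by simp)
    (hcl'.mem_edges (by simp) (by simp [hqy.1]) ((deleteEdges_adj ..).mpr ⟨hGxy, hxy'⟩))
    (by simp [hqy.2])
  omega

/-! ### A removable edge outside a chordal subgraph -/

theorem isClique_commonNeighbors_of_eliminate (hv : ∀ w, G.Adj v w → G'.Adj v w)
    (hab : (G.restrict {v}ᶜ).Adj a b) (hab' : ¬ (G'.eliminate v).Adj a b)
    (hC : (G.restrict {v}ᶜ).IsClique ((G.restrict {v}ᶜ).commonNeighbors a b)) :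
    ¬ G'.Adj a b ∧ G.IsClique (G.commonNeighbors a b) := by
  obtain ⟨hav, hbv, hab⟩ := hab
  have hC' : ∀ x ∈ G.commonNeighbors a b, x ∈ (G.restrict {v}ᶜ).commonNeighbors a b := by
    rintro x ⟨hax, hbx⟩
    have hxv : x ≠ v := by
      rintro rfl
      exact hab' ⟨hav, hbv, .inr ⟨hab.ne, hv a hax.symm, hv b hbx.symm⟩⟩
    exact ⟨⟨hav, hxv, hax⟩, ⟨hbv, hxv, hbx⟩⟩
  exact ⟨fun h => hab' ⟨hav, hbv, .inl h⟩,
    fun x hx y hy hxy => (hC (hC' x hx) (hC' y hy) hxy).2.2⟩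

/-- Otherwise some common neighbour `z` of `c` and `d` lies outside the closed neighbourhood of
`v`, and `v c z d` is a chordless square in `G'`. -/
theorem _root_.IsChordal.isClique_commonNeighbors_of_forall_adj (hG' : IsChordal G')
    (hle : G' ≤ G) (hv : G.IsClique (G.neighborSet v)) (hvG' : ∀ w, G.Adj v w → G'.Adj v w)
    (hout : ∀ x y, G.Adj x y → ¬ G'.Adj x y → G.Adj v y) (hcd : G.Adj c d)
    (hncd : ¬ G'.Adj c d) : G.IsClique (G.commonNeighbors c d) := by
  intro x hx y hy hxy
  by_contra hnxy
  obtain ⟨z, hz, hvz, hzv⟩ : ∃ z ∈ G.commonNeighbors c d, ¬ G.Adj v z ∧ z ≠ v := by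
    by_cases hx' : x = v ∨ G.Adj v x
    · refine ⟨y, hy, fun hvy => ?_, ?_⟩
      · rcases hx' with rfl | hvx
        · exact hnxy hvy
        · exact hnxy (hv hvx hvy hxy)
      · rintro rfl
        rcases hx' with rfl | hvx
        · exact hxy rfl
        · exact hnxy hvx.symm
    · push Not at hx'
      exact ⟨x, hx, hx'.2, hx'.1⟩
  have hG'z : ∀ {u}, G.Adj u z → G'.Adj u z := fun huz =>
    by_contra fun h => hvz (hout _ _ huz h)
  rcases hG'.adj_or_adj_of_square (hvG' c (hout d c hcd.symm fun h => hncd h.symm))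
    (hG'z hz.1) (hG'z hz.2).symm (hvG' d (hout c d hcd hncd)).symm hzv.symm hcd.ne with h | h
  · exact hncd h
  · exact hvz (hle h)

theorem ncard_edgeSet_restrict_compl_lt [Finite V] (h : G.Adj v w) :
    (G.restrict {v}ᶜ).edgeSet.ncard < G.edgeSet.ncard :=
  Set.ncard_lt_ncard ((Set.ssubset_iff_of_subset (edgeSet_mono restrict_le)).mpr
    ⟨s(v, w), h, fun h' => (h' : (G.restrict _).Adj v w).1 rfl⟩) (Set.toFinite _)

theorem _root_.IsChordal.exists_adj_isClique_commonNeighbors [Finite V] (hG : IsChordal G)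
    (hG' : IsChordal G') (hle : G' ≤ G) (hcd : G.Adj c d) (hncd : ¬ G'.Adj c d) :
    ∃ a b, G.Adj a b ∧ ¬ G'.Adj a b ∧ G.IsClique (G.commonNeighbors a b) := by
  induction hn : G.edgeSet.ncard using Nat.strong_induction_on generalizing G G' c d with
  | _ n ih =>
  obtain ⟨v, ⟨w₀, hvw₀⟩, hv⟩ := hG.exists_isClique_neighborSet hcd
  by_cases hvF : ∃ w, G.Adj v w ∧ ¬ G'.Adj v w
  · obtain ⟨w, hvw, hvw'⟩ := hvF
    exact ⟨v, w, hvw, hvw', hv.subset fun x hx => hx.1⟩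
  have hvG' : ∀ w, G.Adj v w → G'.Adj v w := fun w hw => by_contra fun h => hvF ⟨w, hw, h⟩
  by_cases hout : ∃ c' d', G.Adj c' d' ∧ ¬ G'.Adj c' d' ∧ ¬ G.Adj v d'
  · obtain ⟨c', d', hcd', hncd', hvd'⟩ := hout
    have hc'v : c' ≠ v := by
      rintro rfl
      exact hncd' (hvG' d' hcd')
    have hd'v : d' ≠ v := by
      rintro rfl
      exact hncd' (hvG' c' hcd'.symm).symm
    obtain ⟨a, b, hab, hab', hC⟩ := ih _ (hn ▸ ncard_edgeSet_restrict_compl_lt hvw₀)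
      (hG.restrict _) (hG'.eliminate v) (eliminate_le_restrict_compl hle hv)
      (c := c') (d := d') ⟨hc'v, hd'v, hcd'⟩
      (fun ⟨_, _, h⟩ => h.elim hncd' fun h => hvd' (hle h.2.2)) rfl
    exact ⟨a, b, hab.2.2, isClique_commonNeighbors_of_eliminate hvG' hab hab' hC⟩
  simp only [not_exists, not_and, not_not] at hout
  exact ⟨c, d, hcd, hncd, hG'.isClique_commonNeighbors_of_forall_adj hle hv hvG' hout hcd hncd⟩

theorem eq_of_le_of_ncard_edgeSet_sdiff_eq_zero [Finite V] (hle : G' ≤ G)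
    (h : (G.edgeSet \ G'.edgeSet).ncard = 0) : G' = G :=
  le_antisymm hle <| edgeSet_subset_edgeSet.mp <| Set.sdiff_eq_empty.mp <|
    (Set.ncard_eq_zero (Set.toFinite _)).mp h

theorem _root_.IsChordal.exists_isChordal_deleteEdges [Finite V] (hG : IsChordal G)
    (hG' : IsChordal G') (hle : G' ≤ G) (hF : (G.edgeSet \ G'.edgeSet).Nonempty) :
    ∃ e ∈ G.edgeSet \ G'.edgeSet, IsChordal (G.deleteEdges {e}) := by
  obtain ⟨e, he, he'⟩ := hF
  induction e using Sym2.ind with | h c d => ?_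
  obtain ⟨a, b, hab, hab', hC⟩ := hG.exists_adj_isClique_commonNeighbors hG' hle he he'
  exact ⟨s(a, b), ⟨hab, hab'⟩, hG.deleteEdges_of_isClique hab hC⟩

end SimpleGraph

open SimpleGraph in
/-- Decomposable graph chain rule: if `G` is chordal and `G' ≤ G` is a chordal
subgraph on the same vertex set with `|E \ E'| = k`, then there is an increasing
sequence of chordal graphs `G' = G₀ ⊂ G₁ ⊂ ⋯ ⊂ G_k = G` in which consecutive
graphs differ by exactly one edge. -/
theorem chordal_chain_rule {V : Type*} [Fintype V] (G G' : SimpleGraph V)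
    (hG : IsChordal G) (hG' : IsChordal G') (hle : G' ≤ G) (k : ℕ)
    (hk : (G.edgeSet \ G'.edgeSet).ncard = k) :
    ∃ f : Fin (k + 1) → SimpleGraph V,
      f 0 = G' ∧ f (Fin.last k) = G ∧ (∀ i, IsChordal (f i)) ∧
      ∀ i : Fin k, f i.castSucc ≤ f i.succ ∧
        ∃ e ∉ (f i.castSucc).edgeSet,
          (f i.succ).edgeSet = insert e (f i.castSucc).edgeSet := by
  induction k generalizing G with
  | zero =>
    exact ⟨fun _ => G', rfl, eq_of_le_of_ncard_edgeSet_sdiff_eq_zero hle hk, fun _ => hG',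
      fun i => i.elim0⟩
  | succ k ih =>
    obtain ⟨e, he, hGe⟩ := hG.exists_isChordal_deleteEdges hG' hle
      (Set.nonempty_of_ncard_ne_zero (by omega))
    have hle' : G' ≤ G.deleteEdges {e} := fun x y hxy =>
      (deleteEdges_adj ..).mpr ⟨hle hxy, fun h => he.2 (Set.mem_singleton_iff.mp h ▸ hxy)⟩
    have hk' : ((G.deleteEdges {e}).edgeSet \ G'.edgeSet).ncard = k := by
      rw [edgeSet_deleteEdges, Set.sdiff_sdiff_comm, Set.ncard_sdiff_singleton_of_mem he, hk]
      rfl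
    obtain ⟨f, hf0, hflast, hfG, hfstep⟩ := ih _ hGe hle' hk'
    refine ⟨Fin.snoc f G, by simpa using hf0, by simp, Fin.lastCases ?_ fun i => ?_,
      Fin.lastCases ?_ fun i => ?_⟩
    · simpa using hG
    · simpa using hfG i
    · simp only [Fin.snoc_castSucc, Fin.succ_last, Fin.snoc_last, hflast]
      refine ⟨deleteEdges_le _, e, by simp [edgeSet_deleteEdges], ?_⟩
      rw [edgeSet_deleteEdges, Set.insert_sdiff_singleton, Set.insert_eq_of_mem he.1]
    · rw [Fin.succ_castSucc, Fin.snoc_castSucc, Fin.snoc_castSucc]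
      exact hfstep i
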